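/- arXiv:2208.14644 — 2 statements merged into one kernel-verified Lean document; each statement's English description precedes it below -/
import Mathlib

section
/- If f is in the class S*_ρ of starlike functions associated with the petal-shaped domain (i.e., z f'(z)/f(z) is subordinate to 1 + arcsinh z on the unit disk), with Taylor expansion f(z) = z + Σ_{n≥2} a_n z^n, then |a_2| ≤ 1. -/
/-!
Write `z f'(z) = f(z) (1 + arcsinh (w z))` with `w` a Schwarz function. Since `arcsinh 0 = 0` and
`arcsinh' 0 = 1`, differentiating this relation twice at `0` gives `f''(0) = 2 w'(0)`, i.e.
`a₂ = w'(0)`, and the Schwarz lemma bounds `|w'(0)| ≤ 1`.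
-/

open Metric

/-- Principal branch of the complex inverse hyperbolic sine:
`arcsinh ζ = log (ζ + (1 + ζ²)^(1/2))`. -/
noncomputable def carcsinh (ζ : ℂ) : ℂ :=
  Complex.log (ζ + (1 + ζ ^ 2) ^ ((1 : ℂ) / 2))

/-- `f` belongs to the class `S*_ρ` of starlike functions associated with the
petal-shaped domain: `f` is analytic on the unit disk with `f 0 = 0`,
`f' 0 = 1`, and there is a Schwarz function `w` with
`z f'(z) = f(z) (1 + arcsinh (w z))` on the unit disk. -/
def InStarRho (f : ℂ → ℂ) : Prop :=
  AnalyticOnNhd ℂ f (ball (0 : ℂ) 1) ∧ f 0 = 0 ∧ deriv f 0 = 1 ∧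
    ∃ w : ℂ → ℂ, AnalyticOnNhd ℂ w (ball (0 : ℂ) 1) ∧ w 0 = 0 ∧
      (∀ z ∈ ball (0 : ℂ) 1, ‖w z‖ ≤ ‖z‖) ∧
      ∀ z ∈ ball (0 : ℂ) 1, z * deriv f z = f z * (1 + carcsinh (w z))

open Filter Topology

lemma carcsinh_zero : carcsinh 0 = 0 := by
  simp [carcsinh]

lemma analyticAt_carcsinh_zero : AnalyticAt ℂ carcsinh 0 := by
  have hsqrt : AnalyticAt ℂ (fun ζ : ℂ => (1 + ζ ^ 2) ^ ((1 : ℂ) / 2)) 0 :=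
    (analyticAt_const.add (analyticAt_id.pow 2)).cpow analyticAt_const (by simp)
  exact (analyticAt_id.add hsqrt).clog (by simp)

lemma hasDerivAt_carcsinh_zero : HasDerivAt carcsinh 1 0 := by
  have hsqrt : HasDerivAt (fun ζ : ℂ => (1 + ζ ^ 2) ^ ((1 : ℂ) / 2)) 0 0 := by
    simpa using ((hasDerivAt_pow 2 (0 : ℂ)).const_add 1).cpow_const (c := (1 : ℂ) / 2)
      (by simp)
  have hlog : HasDerivAt Complex.log 1 (0 + (1 + 0 ^ 2) ^ ((1 : ℂ) / 2)) := by
    simpa using Complex.hasDerivAt_log (by simp : (1 : ℂ) ∈ Complex.slitPlane)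
  exact (hlog.comp (0 : ℂ) ((hasDerivAt_id' 0).add hsqrt)).congr_deriv (by simp)

section PowerSeries

variable {𝕜 : Type*} [RCLike 𝕜] {f : 𝕜 → 𝕜} {a : ℕ → 𝕜} {r : ℝ}

lemma le_radius_ofScalars_of_hasSum
    (h : ∀ z ∈ ball (0 : 𝕜) r, HasSum (fun n => a n * z ^ n) (f z)) :
    ENNReal.ofReal r ≤ (FormalMultilinearSeries.ofScalars 𝕜 a).radius := by
  refine ENNReal.le_of_forall_nnreal_lt fun s hs => ?_
  have hsr : (s : ℝ) < r := by
    simpa using (ENNReal.lt_ofReal_iff_toReal_lt ENNReal.coe_ne_top).1 hs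
  have hmem : ((s : ℝ) : 𝕜) ∈ ball (0 : 𝕜) r := by simpa using hsr
  refine FormalMultilinearSeries.le_radius_of_tendsto _ (l := 0) ?_
  simpa [FormalMultilinearSeries.ofScalars_norm] using (h _ hmem).summable.tendsto_atTop_zero.norm

lemma hasFPowerSeriesOnBall_ofScalars_of_hasSum (hr : 0 < r)
    (h : ∀ z ∈ ball (0 : 𝕜) r, HasSum (fun n => a n * z ^ n) (f z)) :
    HasFPowerSeriesOnBall f (FormalMultilinearSeries.ofScalars 𝕜 a) 0 (ENNReal.ofReal r) where
  r_le := le_radius_ofScalars_of_hasSum h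
  r_pos := by simpa using hr
  hasSum {y} hy := by
    simpa [FormalMultilinearSeries.ofScalars_apply_eq, mul_comm] using h y (by simpa using hy)

lemma iteratedDeriv_eq_factorial_mul_of_hasSum (hr : 0 < r)
    (h : ∀ z ∈ ball (0 : 𝕜) r, HasSum (fun n => a n * z ^ n) (f z)) (n : ℕ) :
    iteratedDeriv n f 0 = n.factorial * a n := by
  rw [iteratedDeriv_eq_iteratedFDeriv,
    ← (hasFPowerSeriesOnBall_ofScalars_of_hasSum hr h).factorial_smul]
  simp

end PowerSeries

section SecondDerivative

variable {𝕜 : Type*} [NontriviallyNormedField 𝕜] [CompleteSpace 𝕜] {f φ : 𝕜 → 𝕜}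

lemma deriv_deriv_zero_eq_two_mul_deriv_zero (hf : AnalyticAt 𝕜 f 0) (hφ : AnalyticAt 𝕜 φ 0)
    (hf0 : f 0 = 0) (hf1 : deriv f 0 = 1) (hφ0 : φ 0 = 0)
    (h : (fun z => z * deriv f z) =ᶠ[𝓝 0] fun z => f z * (1 + φ z)) :
    deriv (deriv f) 0 = 2 * deriv φ 0 := by
  have hlhs : deriv (fun z => z * deriv f z) =ᶠ[𝓝 0]
      fun z => deriv f z + z * deriv (deriv f) z := by
    filter_upwards [hf.eventually_analyticAt] with z hz
    exact (((hasDerivAt_id z).mul hz.deriv.differentiableAt.hasDerivAt).congr_deriv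
      (by simp)).deriv
  have hrhs : deriv (fun z => f z * (1 + φ z)) =ᶠ[𝓝 0]
      fun z => deriv f z * (1 + φ z) + f z * deriv φ z := by
    filter_upwards [hf.eventually_analyticAt, hφ.eventually_analyticAt] with z hfz hφz
    exact (hfz.differentiableAt.hasDerivAt.mul
      (hφz.differentiableAt.hasDerivAt.const_add 1)).deriv
  have hL : HasDerivAt (fun z => deriv f z + z * deriv (deriv f) z)
      (2 * deriv (deriv f) 0) 0 :=
    (hf.deriv.differentiableAt.hasDerivAt.add ((hasDerivAt_id 0).mul
      hf.deriv.deriv.differentiableAt.hasDerivAt)).congr_deriv (by simp; ring)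
  have hR : HasDerivAt (fun z => deriv f z * (1 + φ z) + f z * deriv φ z)
      (deriv (deriv f) 0 + 2 * deriv φ 0) 0 :=
    ((hf.deriv.differentiableAt.hasDerivAt.mul (hφ.differentiableAt.hasDerivAt.const_add 1)).add
      (hf.differentiableAt.hasDerivAt.mul hφ.deriv.differentiableAt.hasDerivAt)).congr_deriv
      (by simp [hf0, hf1, hφ0]; ring)
  have key := (hlhs.symm.trans (h.deriv.trans hrhs)).deriv_eq
  rw [hL.deriv, hR.deriv] at key
  linear_combination key

end SecondDerivative

theorem abs_a2_le_one_general (f : ℂ → ℂ) (a : ℕ → ℂ) (hf : InStarRho f)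
    (hrep : ∀ z ∈ ball (0 : ℂ) 1, HasSum (fun n : ℕ => a n * z ^ n) (f z)) :
    ‖a 2‖ ≤ 1 := by
  obtain ⟨hfa, hf0, hf1, w, hwa, hw0, hwle, hrel⟩ := hf
  have h0 : (0 : ℂ) ∈ ball (0 : ℂ) 1 := mem_ball_self one_pos
  have hcoeff : deriv (deriv f) 0 = 2 * a 2 := by
    simpa [iteratedDeriv_succ] using iteratedDeriv_eq_factorial_mul_of_hasSum one_pos hrep 2
  have hφ : AnalyticAt ℂ (carcsinh ∘ w) 0 :=
    analyticAt_carcsinh_zero.comp_of_eq (hwa 0 h0) hw0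
  have hφ' : deriv (carcsinh ∘ w) 0 = deriv w 0 := by
    simpa using (hasDerivAt_carcsinh_zero.comp_of_eq 0 (hwa 0 h0).differentiableAt.hasDerivAt
      hw0.symm).deriv
  have ha2 : a 2 = deriv w 0 := by
    have := deriv_deriv_zero_eq_two_mul_deriv_zero (hfa 0 h0) hφ hf0 hf1
      (by simp [hw0, carcsinh_zero]) (eventually_of_mem (isOpen_ball.mem_nhds h0) hrel)
    rw [hcoeff, hφ'] at this
    exact mul_left_cancel₀ two_ne_zero this
  rw [ha2]
  refine Complex.norm_deriv_le_one_of_mapsTo_ball hwa.differentiableOn (fun z hz => ?_) one_pos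
  simpa [hw0] using (hwle z hz).trans (mem_ball_zero_iff.1 hz).le

theorem abs_a2_le_one (f : ℂ → ℂ) (a : ℕ → ℂ) (hf : InStarRho f)
    (ha0 : a 0 = 0) (ha1 : a 1 = 1)
    (hrep : ∀ z ∈ ball (0 : ℂ) 1, HasSum (fun n : ℕ => a n * z ^ n) (f z)) :
    ‖a 2‖ ≤ 1 :=
  abs_a2_le_one_general f a hf hrep
end

section
/- If p is in the Carathéodory class P with Taylor expansion p(z) = 1 + Σ_{n≥1} p_n z^n, then |p_3 − 2 p_1 p_2 + p_1³| ≤ 2. -/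
open Metric

/-- `p` belongs to the Carathéodory class: `p` is analytic on the unit disk,
`p 0 = 1`, and `Re (p z) > 0` on the unit disk. -/
def InCaratheodory (p : ℂ → ℂ) : Prop :=
  AnalyticOnNhd ℂ p (ball (0 : ℂ) 1) ∧ p 0 = 1 ∧
    ∀ z ∈ ball (0 : ℂ) 1, 0 < (p z).re

/-
Since `Re p > 0`, `p` has no zeros on the disc and `q = 1/p` is again in the Carathéodory
class. Comparing coefficients in `p · q = 1` gives `q₃ = -(p₃ - 2 p₁ p₂ + p₁³)`, so the claim
is Carathéodory's bound `|qₙ| ≤ 2` (n ≥ 1). For that, integrate on the circle `|z| = r < 1`: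
termwise integration of the power series shows that `q + conj q = 2 Re q` has `n`-th Fourier
coefficient `qₙ rⁿ`, while the positive function `2 Re q` has mean `2 q₀ = 2`. Hence
`|qₙ| rⁿ ≤ 2`; let `r → 1`.
-/

open Complex Filter Finset MeasureTheory Topology
open scoped Real ComplexConjugate

def HasCoeffsOnUnitDisc (f : ℂ → ℂ) (a : ℕ → ℂ) : Prop :=
  ∀ z ∈ ball (0 : ℂ) 1, HasSum (fun n ↦ a n * z ^ n) (f z)

namespace HasCoeffsOnUnitDisc

variable {f g : ℂ → ℂ} {a b : ℕ → ℂ}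

theorem coeff_zero (ha : HasCoeffsOnUnitDisc f a) : a 0 = f 0 :=
  Eq.symm <| (ha 0 (mem_ball_self one_pos)).unique <| by
    simpa using hasSum_single (f := fun n ↦ a n * 0 ^ n) 0 fun n hn ↦ by simp [hn]

theorem one_le_radius (ha : HasCoeffsOnUnitDisc f a) :
    1 ≤ (FormalMultilinearSeries.ofScalars ℂ a).radius := by
  refine ENNReal.le_of_forall_nnreal_lt fun r hr ↦ ?_
  have hr : (r : ℂ) ∈ ball (0 : ℂ) 1 := by simpa using hr
  refine FormalMultilinearSeries.le_radius_of_tendsto _ (l := 0) ?_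
  simpa using (ha r hr).summable.tendsto_atTop_zero.norm

theorem summable_norm_mul_pow (ha : HasCoeffsOnUnitDisc f a) {r : ℝ} (hr0 : 0 ≤ r)
    (hr1 : r < 1) :
    Summable fun n ↦ ‖a n‖ * r ^ n := by
  lift r to NNReal using hr0
  have hr : (r : ENNReal) < (FormalMultilinearSeries.ofScalars ℂ a).radius :=
    lt_of_lt_of_le (by exact_mod_cast hr1) ha.one_le_radius
  simpa using (FormalMultilinearSeries.ofScalars ℂ a).summable_norm_mul_pow hr

theorem hasFPowerSeriesOnBall (ha : HasCoeffsOnUnitDisc f a) :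
    HasFPowerSeriesOnBall f (FormalMultilinearSeries.ofScalars ℂ a) 0 1 where
  r_le := ha.one_le_radius
  r_pos := one_pos
  hasSum {y} hy := by
    simpa [FormalMultilinearSeries.ofScalars_apply_eq, mul_comm] using
      ha y (by simpa [← ofReal_norm] using hy)

theorem unique (ha : HasCoeffsOnUnitDisc f a) (hb : HasCoeffsOnUnitDisc f b) : a = b :=
  FormalMultilinearSeries.ofScalars_series_injective ℂ ℂ <|
    ha.hasFPowerSeriesOnBall.hasFPowerSeriesAt.eq_formalMultilinearSeries
      hb.hasFPowerSeriesOnBall.hasFPowerSeriesAt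

theorem mul (ha : HasCoeffsOnUnitDisc f a) (hb : HasCoeffsOnUnitDisc g b) :
    HasCoeffsOnUnitDisc (fun z ↦ f z * g z)
      (fun n ↦ ∑ kl ∈ antidiagonal n, a kl.1 * b kl.2) := by
  intro z hz
  have hnorm : ∀ {c : ℕ → ℂ} {h : ℂ → ℂ}, HasCoeffsOnUnitDisc h c →
      Summable fun n ↦ ‖c n * z ^ n‖ := fun hc ↦ by
    simpa using hc.summable_norm_mul_pow (norm_nonneg z) (mem_ball_zero_iff.mp hz)
  have hterm : ∀ n, ∑ kl ∈ antidiagonal n, a kl.1 * z ^ kl.1 * (b kl.2 * z ^ kl.2) =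
      (∑ kl ∈ antidiagonal n, a kl.1 * b kl.2) * z ^ n := fun n ↦ by
    rw [sum_mul]
    refine sum_congr rfl fun kl hkl ↦ ?_
    rw [← mem_antidiagonal.mp hkl, pow_add]
    ring
  show HasSum _ (f z * g z)
  rw [← (ha z hz).tsum_eq, ← (hb z hz).tsum_eq,
    tsum_mul_tsum_eq_tsum_sum_antidiagonal_of_summable_norm (hnorm ha) (hnorm hb)]
  simpa only [hterm] using
    (summable_norm_sum_mul_antidiagonal_of_summable_norm (hnorm ha) (hnorm hb)).of_norm.hasSum

theorem inv_coeff_three (ha : HasCoeffsOnUnitDisc f a)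
    (hb : HasCoeffsOnUnitDisc (fun z ↦ (f z)⁻¹) b) (hf : ∀ z ∈ ball (0 : ℂ) 1, f z ≠ 0)
    (ha0 : a 0 = 1) :
    b 3 = -(a 3 - 2 * a 1 * a 2 + a 1 ^ 3) := by
  have hone : HasCoeffsOnUnitDisc (fun z ↦ f z * (f z)⁻¹) (fun n ↦ if n = 0 then 1 else 0) :=
    fun z hz ↦ by
      show HasSum _ (f z * (f z)⁻¹)
      rw [mul_inv_cancel₀ (hf z hz)]
      exact (hasSum_ite_eq 0 1).congr_fun fun n ↦ by split_ifs with hn <;> simp [hn]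
  have hconv := (ha.mul hb).unique hone
  have e0 := congrFun hconv 0
  have e1 := congrFun hconv 1
  have e2 := congrFun hconv 2
  have e3 := congrFun hconv 3
  simp only [HasAntidiagonal.antidiagonal_zero, sum_singleton, Nat.sum_antidiagonal_succ, ha0,
    one_mul, zero_add, Nat.reduceAdd, ↓reduceIte, one_ne_zero, OfNat.ofNat_ne_zero] at e0 e1 e2 e3
  have hb1 : b 1 = -a 1 := by linear_combination e1 - a 1 * e0
  have hb2 : b 2 = a 1 ^ 2 - a 2 := by linear_combination e2 - a 1 * hb1 - a 2 * e0
  linear_combination e3 - a 1 * hb2 - a 2 * hb1 - a 3 * e0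

end HasCoeffsOnUnitDisc

theorem AnalyticOnNhd.exists_hasCoeffsOnUnitDisc {f : ℂ → ℂ}
    (hf : AnalyticOnNhd ℂ f (ball (0 : ℂ) 1)) : ∃ a, HasCoeffsOnUnitDisc f a :=
  ⟨fun n ↦ (n.factorial : ℂ)⁻¹ * iteratedDeriv n f 0, fun z hz ↦ by
    simpa [smul_eq_mul, mul_assoc, mul_comm, mul_left_comm] using
      Complex.hasSum_taylorSeries_on_ball hf.differentiableOn hz⟩

theorem integral_exp_intCast_mul_I (k : ℤ) :
    ∫ θ in (0 : ℝ)..2 * π, cexp (k * θ * I) = if k = 0 then (2 * π : ℂ) else 0 := by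
  split_ifs with hk
  · simp [hk]
  have hkI : (k : ℂ) * I ≠ 0 := by simpa using hk
  have hperiod : cexp (k * I * (2 * π : ℝ)) = 1 := by
    rw [← exp_int_mul_two_pi_mul_I k]; push_cast; ring_nf
  simp_rw [mul_right_comm _ _ I]
  rw [integral_exp_mul_complex hkI, hperiod]
  simp

theorem ofReal_mul_exp_mem_ball {r : ℝ} (hr0 : 0 < r) (hr1 : r < 1) (θ : ℝ) :
    (r : ℂ) * cexp (θ * I) ∈ ball (0 : ℂ) 1 := by
  simpa [abs_of_pos hr0] using hr1

namespace HasCoeffsOnUnitDisc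

variable {f : ℂ → ℂ} {a : ℕ → ℂ} {r : ℝ}

theorem hasSum_integral_mul_exp (ha : HasCoeffsOnUnitDisc f a) (hr0 : 0 < r) (hr1 : r < 1)
    (k : ℤ) :
    HasSum (fun n : ℕ ↦ if (n : ℤ) = k then 2 * π * (a n * r ^ n) else 0)
      (∫ θ in (0 : ℝ)..2 * π, f (r * cexp (θ * I)) * cexp (-k * θ * I)) := by
  have hterm : ∀ (n : ℕ) (θ : ℝ), a n * (r * cexp (θ * I)) ^ n * cexp (-k * θ * I) =
      a n * r ^ n * cexp (((n - k : ℤ) : ℂ) * θ * I) := fun n θ ↦ by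
    rw [mul_pow, ← exp_nat_mul, mul_assoc, mul_assoc, ← exp_add]
    push_cast
    ring_nf
  have hsum := intervalIntegral.hasSum_integral_of_dominated_convergence (a := 0) (b := 2 * π)
    (F := fun (n : ℕ) (θ : ℝ) ↦ a n * (r * cexp (θ * I)) ^ n * cexp (-k * θ * I))
    (fun n _ ↦ ‖a n‖ * r ^ n) (fun n ↦ (by fun_prop : Continuous _).aestronglyMeasurable)
    (fun n ↦ ae_of_all _ fun θ _ ↦ by
      rw [hterm]
      simp [norm_exp, abs_of_pos hr0])
    (ae_of_all _ fun θ _ ↦ ha.summable_norm_mul_pow hr0.le hr1)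
    (intervalIntegrable_const (μ := volume))
    (ae_of_all _ fun θ _ ↦ (ha _ (ofReal_mul_exp_mem_ball hr0 hr1 θ)).mul_right _)
  have hint : ∀ n : ℕ, ∫ θ in (0 : ℝ)..2 * π, a n * (r * cexp (θ * I)) ^ n * cexp (-k * θ * I) =
      if (n : ℤ) = k then 2 * π * (a n * r ^ n) else 0 := fun n ↦ by
    simp_rw [hterm n]
    rw [intervalIntegral.integral_const_mul, integral_exp_intCast_mul_I]
    simp only [sub_eq_zero]
    split_ifs <;> ring
  simpa only [hint] using hsum

theorem integral_mul_exp_neg_natCast (ha : HasCoeffsOnUnitDisc f a) (hr0 : 0 < r) (hr1 : r < 1)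
    (n : ℕ) :
    ∫ θ in (0 : ℝ)..2 * π, f (r * cexp (θ * I)) * cexp (-n * θ * I) = 2 * π * (a n * r ^ n) := by
  have h := ha.hasSum_integral_mul_exp hr0 hr1 n
  simp only [Nat.cast_inj, Int.cast_natCast] at h
  rw [← h.tsum_eq, tsum_eq_single n fun m hm ↦ if_neg hm, if_pos rfl]

theorem integral_mul_exp_natCast (ha : HasCoeffsOnUnitDisc f a) (hr0 : 0 < r) (hr1 : r < 1)
    {n : ℕ} (hn : 1 ≤ n) :
    ∫ θ in (0 : ℝ)..2 * π, f (r * cexp (θ * I)) * cexp (n * θ * I) = 0 := by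
  have h := ha.hasSum_integral_mul_exp hr0 hr1 (-n)
  have hne : ∀ m : ℕ, (m : ℤ) ≠ -n := by omega
  simp only [hne, if_false, Int.cast_neg, Int.cast_natCast, neg_neg] at h
  exact h.unique hasSum_zero

end HasCoeffsOnUnitDisc

theorem norm_integral_add_conj_mul_le {F g : ℝ → ℂ} {s t : ℝ} (hst : s ≤ t) (hF : Continuous F)
    (hre : ∀ θ, 0 ≤ (F θ).re) (hg : ∀ θ, ‖g θ‖ = 1) :
    ‖∫ θ in s..t, (F θ + conj (F θ)) * g θ‖ ≤ 2 * (∫ θ in s..t, F θ).re :=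
  calc ‖∫ θ in s..t, (F θ + conj (F θ)) * g θ‖
      _ ≤ ∫ θ in s..t, ‖(F θ + conj (F θ)) * g θ‖ :=
        intervalIntegral.norm_integral_le_integral_norm hst
      _ = ∫ θ in s..t, 2 * (F θ).re := intervalIntegral.integral_congr fun θ _ ↦ by
        rw [norm_mul, hg, add_conj, mul_one, norm_real, Real.norm_of_nonneg (by linarith [hre θ])]
      _ = 2 * (∫ θ in s..t, F θ).re := by
        rw [intervalIntegral.integral_const_mul]
        exact congrArg _ (intervalIntegral.intervalIntegral_re (hF.intervalIntegrable s t))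

namespace InCaratheodory

variable {f : ℂ → ℂ} {a : ℕ → ℂ}

theorem ne_zero (hf : InCaratheodory f) {z : ℂ} (hz : z ∈ ball (0 : ℂ) 1) : f z ≠ 0 :=
  fun h ↦ by simpa [h] using hf.2.2 z hz

theorem inv (hf : InCaratheodory f) : InCaratheodory fun z ↦ (f z)⁻¹ :=
  ⟨fun z hz ↦ (hf.1 z hz).inv (hf.ne_zero hz), by simp [hf.2.1], fun z hz ↦ by
    rw [inv_re]
    exact div_pos (hf.2.2 z hz) (normSq_pos.mpr (hf.ne_zero hz))⟩

theorem norm_coeff_mul_pow_le_two (hf : InCaratheodory f) (ha : HasCoeffsOnUnitDisc f a) {n : ℕ}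
    (hn : 1 ≤ n) {r : ℝ} (hr0 : 0 < r) (hr1 : r < 1) : ‖a n‖ * r ^ n ≤ 2 := by
  set F : ℝ → ℂ := fun θ ↦ f (r * cexp (θ * I))
  have hF : Continuous F :=
    hf.1.continuousOn.comp_continuous (by fun_prop) (ofReal_mul_exp_mem_ball hr0 hr1)
  have hmean : ∫ θ in (0 : ℝ)..2 * π, F θ = 2 * π := by
    simpa [ha.coeff_zero, hf.2.1] using ha.integral_mul_exp_neg_natCast hr0 hr1 0
  have hconj : ∫ θ in (0 : ℝ)..2 * π, conj (F θ) * cexp (-n * θ * I) = 0 :=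
    calc ∫ θ in (0 : ℝ)..2 * π, conj (F θ) * cexp (-n * θ * I)
        _ = ∫ θ in (0 : ℝ)..2 * π, conj (F θ * cexp (n * θ * I)) := by
          congr 1 with θ
          rw [map_mul, ← exp_conj]
          simp
        _ = 0 := by
          rw [intervalIntegral.intervalIntegral_conj, ha.integral_mul_exp_natCast hr0 hr1 hn,
            map_zero]
  have hcoeff : ∫ θ in (0 : ℝ)..2 * π, (F θ + conj (F θ)) * cexp (-n * θ * I) =
      2 * π * (a n * r ^ n) := by
    simp_rw [add_mul]
    rw [intervalIntegral.integral_add (Continuous.intervalIntegrable (by fun_prop) _ _)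
      (Continuous.intervalIntegrable (by fun_prop) _ _), hconj, add_zero,
      ha.integral_mul_exp_neg_natCast hr0 hr1 n]
  have hbound : 2 * π * (‖a n‖ * r ^ n) ≤ 2 * π * 2 :=
    calc 2 * π * (‖a n‖ * r ^ n)
        _ = ‖∫ θ in (0 : ℝ)..2 * π, (F θ + conj (F θ)) * cexp (-n * θ * I)‖ := by
          rw [hcoeff]
          simp [abs_of_pos hr0, abs_of_pos Real.pi_pos]
        _ ≤ 2 * (∫ θ in (0 : ℝ)..2 * π, F θ).re :=
          norm_integral_add_conj_mul_le Real.two_pi_pos.le hF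
            (fun θ ↦ (hf.2.2 _ (ofReal_mul_exp_mem_ball hr0 hr1 θ)).le)
            (fun θ ↦ by rw [norm_exp]; simp)
        _ = 2 * π * 2 := by
          rw [hmean]
          simp only [mul_re, re_ofNat, ofReal_re, im_ofNat, ofReal_im, mul_zero, sub_zero]
          ring
  exact le_of_mul_le_mul_left hbound Real.two_pi_pos

theorem norm_coeff_le_two (hf : InCaratheodory f) (ha : HasCoeffsOnUnitDisc f a) {n : ℕ}
    (hn : 1 ≤ n) : ‖a n‖ ≤ 2 := by
  have hlim : Tendsto (fun r : ℝ ↦ ‖a n‖ * r ^ n) (𝓝[<] 1) (𝓝 ‖a n‖) := by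
    have hcont : Continuous fun r : ℝ ↦ ‖a n‖ * r ^ n := by fun_prop
    simpa using (hcont.tendsto 1).mono_left nhdsWithin_le_nhds
  refine le_of_tendsto hlim ?_
  filter_upwards [Ioo_mem_nhdsLT zero_lt_one] with r hr
  exact hf.norm_coeff_mul_pow_le_two ha hn hr.1 hr.2

end InCaratheodory

theorem cara_cubic_bound_general (p : ℂ → ℂ) (c : ℕ → ℂ) (hp : InCaratheodory p)
    (hrep : ∀ z ∈ ball (0 : ℂ) 1, HasSum (fun n : ℕ => c n * z ^ n) (p z)) :
    ‖c 3 - 2 * c 1 * c 2 + c 1 ^ 3‖ ≤ 2 := by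
  have hc : HasCoeffsOnUnitDisc p c := hrep
  obtain ⟨d, hd⟩ := hp.inv.1.exists_hasCoeffsOnUnitDisc
  rw [← norm_neg, ← hc.inv_coeff_three hd (fun z hz ↦ hp.ne_zero hz) (hc.coeff_zero.trans hp.2.1)]
  exact hp.inv.norm_coeff_le_two hd (by norm_num)

theorem cara_cubic_bound (p : ℂ → ℂ) (c : ℕ → ℂ) (hp : InCaratheodory p)
    (hc0 : c 0 = 1)
    (hrep : ∀ z ∈ ball (0 : ℂ) 1, HasSum (fun n : ℕ => c n * z ^ n) (p z)) :
    ‖c 3 - 2 * c 1 * c 2 + c 1 ^ 3‖ ≤ 2 :=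
  cara_cubic_bound_general p c hp hrep
end
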